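/- Let G be a graph with a split (A,B,A',B'), and let G_A, G_B be the graphs obtained by applying it. Then |E(G_A)| + |E(G_B)| = |E(G)| − |A|·|B| + |A| + |B|. In particular, if |A|·|B| ≥ |A| + |B| (e.g., if |A|,|B| ≥ 2), then |E(G_A)| + |E(G_B)| ≤ |E(G)|. -/

import Mathlib

/-!
Count ordered pairs of adjacent vertices, i.e. twice the edges. By the split conditions, an
adjacent pair of `G` either lies inside one side `A ∪ A'` or `B ∪ B'`, or is one of the
`|A| * |B|` pairs of `A × B`, taken in either order. The graph `G_A` keeps the pairs inside
`A ∪ A'` and trades the pairs of `A × B` for the `|A|` edges at its marker; likewise for `G_B`.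
-/

/-- A split of a graph `G`: a partition `(A, B, A', B')` of the vertex set such that
every vertex of `A` is adjacent to every vertex of `B`, there are no edges between
`A'` and `B ∪ B'`, no edges between `B'` and `A ∪ A'`, and both sides have size ≥ 2. -/
structure IsSplit {V : Type*} (G : SimpleGraph V) (A B A' B' : Set V) : Prop where
  cover : A ∪ B ∪ A' ∪ B' = Set.univ
  dAB : Disjoint A B
  dAA' : Disjoint A A'
  dAB' : Disjoint A B'
  dBA' : Disjoint B A'
  dBB' : Disjoint B B'
  dA'B' : Disjoint A' B'
  complete : ∀ a ∈ A, ∀ b ∈ B, G.Adj a b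
  noA' : ∀ x ∈ A', ∀ y ∈ B ∪ B', ¬ G.Adj x y
  noB' : ∀ x ∈ B', ∀ y ∈ A ∪ A', ¬ G.Adj x y
  sideA : 2 ≤ (A ∪ A').ncard
  sideB : 2 ≤ (B ∪ B').ncard

/-- The graph obtained from one side of a split: the induced subgraph on `S`
plus a new marker vertex (`none`) adjacent exactly to the vertices of `M ⊆ S`. -/
def sideGraph {V : Type*} (G : SimpleGraph V) (S M : Set V) : SimpleGraph (Option ↥S) where
  Adj x y :=
    match x, y with
    | some u, some v => G.Adj u v
    | some u, none => (u : V) ∈ M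
    | none, some v => (v : V) ∈ M
    | none, none => False
  symm := by
    constructor
    rintro (_ | u) (_ | v) h
    · exact h
    · exact h
    · exact h
    · exact h.symm
  loopless := by
    constructor
    rintro (_ | u) h
    · exact h
    · exact G.irrefl h

open Set

theorem SimpleGraph.two_mul_card_edgeSet_eq_ncard_adj {W : Type*} [Finite W]
    (H : SimpleGraph W) : 2 * Nat.card H.edgeSet = {p : W × W | H.Adj p.1 p.2}.ncard := by
  classical
  have : Fintype W := Fintype.ofFinite W
  rw [Nat.card_coe_set_eq, ncard_eq_toFinset_card', ← SimpleGraph.edgeFinset,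
    ncard_eq_toFinset_card', SimpleGraph.two_mul_card_edgeFinset]
  congr 1
  ext
  simp

section SideGraph

variable {V : Type*} (G : SimpleGraph V) (S M : Set V)

def adjPairsWithin : Set (V × V) := {p | G.Adj p.1 p.2 ∧ p.1 ∈ S ∧ p.2 ∈ S}

variable {S M}

def sideGraphAdjEquiv (hMS : M ⊆ S) :
    {p : Option S × Option S // (sideGraph G S M).Adj p.1 p.2} ≃
      adjPairsWithin G S ⊕ (M ⊕ M) where
  toFun
    | ⟨(some u, some v), h⟩ => .inl ⟨(u, v), h, u.2, v.2⟩
    | ⟨(some u, none), h⟩ => .inr (.inl ⟨u, h⟩)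
    | ⟨(none, some v), h⟩ => .inr (.inr ⟨v, h⟩)
  invFun
    | .inl ⟨(a, b), h⟩ => ⟨(some ⟨a, h.2.1⟩, some ⟨b, h.2.2⟩), h.1⟩
    | .inr (.inl ⟨m, hm⟩) => ⟨(some ⟨m, hMS hm⟩, none), hm⟩
    | .inr (.inr ⟨m, hm⟩) => ⟨(none, some ⟨m, hMS hm⟩), hm⟩
  left_inv := by rintro ⟨⟨(_ | u), (_ | v)⟩, h⟩ <;> first | rfl | exact h.elim
  right_inv := by rintro (⟨⟨a, b⟩, h⟩ | ⟨m, hm⟩ | ⟨m, hm⟩) <;> rfl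

theorem two_mul_card_edgeSet_sideGraph [Finite V] (hMS : M ⊆ S) :
    2 * Nat.card (sideGraph G S M).edgeSet = (adjPairsWithin G S).ncard + 2 * M.ncard := by
  rw [SimpleGraph.two_mul_card_edgeSet_eq_ncard_adj, ← Nat.card_coe_set_eq, coe_ofPred,
    Nat.card_congr (sideGraphAdjEquiv G hMS), Nat.card_sum, Nat.card_sum,
    Nat.card_coe_set_eq, Nat.card_coe_set_eq]
  ring

end SideGraph

namespace IsSplit

variable {V : Type*} {G : SimpleGraph V} {A B A' B' : Set V}

theorem disjoint_sides (h : IsSplit G A B A' B') : Disjoint (A ∪ A') (B ∪ B') :=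
  (h.dAB.union_right h.dAB').union_left (h.dBA'.symm.union_right h.dA'B')

theorem mem_sides (h : IsSplit G A B A' B') (v : V) : v ∈ A ∪ A' ∨ v ∈ B ∪ B' := by
  have hv : v ∈ A ∪ B ∪ A' ∪ B' := h.cover ▸ mem_univ v
  simp only [mem_union] at hv ⊢
  tauto

theorem mem_of_adj_across (h : IsSplit G A B A' B') {x y : V} (hx : x ∈ A ∪ A')
    (hy : y ∈ B ∪ B') (hxy : G.Adj x y) : x ∈ A ∧ y ∈ B := by
  rcases hx with hx | hx
  · rcases hy with hy | hy
    · exact ⟨hx, hy⟩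
    · exact (h.noB' y hy x (.inl hx) hxy.symm).elim
  · exact (h.noA' x hx y hy hxy).elim

theorem setOf_adj_eq (h : IsSplit G A B A' B') :
    {p : V × V | G.Adj p.1 p.2} =
      adjPairsWithin G (A ∪ A') ∪ adjPairsWithin G (B ∪ B') ∪ A ×ˢ B ∪ B ×ˢ A := by
  ext ⟨x, y⟩
  simp only [adjPairsWithin, mem_ofPred_eq, mem_union, mem_prod]
  constructor
  · intro hxy
    rcases h.mem_sides x with hx | hx <;> rcases h.mem_sides y with hy | hy
    · exact .inl (.inl (.inl ⟨hxy, hx, hy⟩))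
    · exact .inl (.inr (h.mem_of_adj_across hx hy hxy))
    · exact .inr (h.mem_of_adj_across hy hx hxy.symm).symm
    · exact .inl (.inl (.inr ⟨hxy, hx, hy⟩))
  · rintro (((⟨hxy, -⟩ | ⟨hxy, -⟩) | ⟨hx, hy⟩) | ⟨hx, hy⟩)
    · exact hxy
    · exact hxy
    · exact h.complete x hx y hy
    · exact (h.complete y hy x hx).symm

theorem two_mul_card_edgeSet [Finite V] (h : IsSplit G A B A' B') :
    2 * Nat.card G.edgeSet = (adjPairsWithin G (A ∪ A')).ncard
      + (adjPairsWithin G (B ∪ B')).ncard + 2 * (A.ncard * B.ncard) := by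
  have hAB : Disjoint (A ∪ A') B := h.disjoint_sides.mono_right subset_union_left
  have hBA : Disjoint (B ∪ B') A := h.disjoint_sides.symm.mono_right subset_union_left
  have d₁ : Disjoint (adjPairsWithin G (A ∪ A')) (adjPairsWithin G (B ∪ B')) :=
    disjoint_left.mpr fun _ hp hq => disjoint_left.mp h.disjoint_sides hp.2.1 hq.2.1
  have d₂ : Disjoint (adjPairsWithin G (A ∪ A') ∪ adjPairsWithin G (B ∪ B')) (A ×ˢ B) := by
    refine disjoint_left.mpr ?_
    rintro p (hp | hp) hq
    · exact disjoint_left.mp hAB hp.2.2 hq.2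
    · exact disjoint_left.mp hBA hp.2.1 hq.1
  have d₃ : Disjoint (adjPairsWithin G (A ∪ A') ∪ adjPairsWithin G (B ∪ B') ∪ A ×ˢ B)
      (B ×ˢ A) := by
    refine disjoint_left.mpr ?_
    rintro p ((hp | hp) | hp) hq
    · exact disjoint_left.mp hAB hp.2.1 hq.1
    · exact disjoint_left.mp hBA hp.2.2 hq.2
    · exact disjoint_left.mp h.dAB hp.1 hq.1
  rw [SimpleGraph.two_mul_card_edgeSet_eq_ncard_adj, h.setOf_adj_eq, ncard_union_eq d₃,
    ncard_union_eq d₂, ncard_union_eq d₁, ncard_prod, ncard_prod]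
  ring

end IsSplit

theorem stmt_7 {V : Type*} [Finite V] (G : SimpleGraph V) (A B A' B' : Set V)
    (h : IsSplit G A B A' B') :
    (Nat.card (sideGraph G (A ∪ A') A).edgeSet
        + Nat.card (sideGraph G (B ∪ B') B).edgeSet + A.ncard * B.ncard
      = Nat.card G.edgeSet + A.ncard + B.ncard) ∧
    (A.ncard + B.ncard ≤ A.ncard * B.ncard →
      Nat.card (sideGraph G (A ∪ A') A).edgeSet
          + Nat.card (sideGraph G (B ∪ B') B).edgeSet
        ≤ Nat.card G.edgeSet) := by
  have hG := h.two_mul_card_edgeSet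
  have hGA := two_mul_card_edgeSet_sideGraph G (subset_union_left : A ⊆ A ∪ A')
  have hGB := two_mul_card_edgeSet_sideGraph G (subset_union_left : B ⊆ B ∪ B')
  have count : Nat.card (sideGraph G (A ∪ A') A).edgeSet
      + Nat.card (sideGraph G (B ∪ B') B).edgeSet + A.ncard * B.ncard
      = Nat.card G.edgeSet + A.ncard + B.ncard := by
    omega
  exact ⟨count, fun hle => by omega⟩
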